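/- arXiv:2212.00304 — 2 statements merged into one kernel-verified Lean document; each statement's English description precedes it below -/
import Mathlib

section
/- Let $p$ be a prime and $R$ a commutative ring of characteristic $p$. Fix $\lambda \in R$. For $f \in R$ define the $(p+1)\times(p+1)$ matrix $A^{(p)}(f)$ with entries $\binom{p-i}{j-i} f^{j-i}$ ($i \le j$, zero otherwise). For $g \in R$ define $P(g) = I + \lambda E_{0,p-1} - g E_{0,p}$, where $E_{a,b}$ is the matrix unit, and define $\widetilde{A}(f)$ to be the block diagonal matrix $\operatorname{diag}(1, A^{(p-1)}(f))$ of size $p+1$. If $f, g, g' \in R$ satisfy $f^p - \lambda f = g' - g$, then $A^{(p)}(f) \cdot P(g') = P(g) \cdot \widetilde{A}(f)$. -/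
/-!
In characteristic `p` the first row of `A⁽ᵖ⁾(f)` holds the coefficients of
`(x + f y) ^ p = x ^ p + f ^ p y ^ p`, so `A⁽ᵖ⁾(f) = Ã(f) + f ^ p E_{0,p}`. Since the first column
of `A⁽ᵖ⁾(f)` is `e₀`, and rows `p - 1`, `p` of `Ã(f)` are `e_{p-1} + f e_p` and `e_p`, both products
differ from `Ã(f) + λ E_{0,p-1}` only in the `(0, p)` entry, which is `f ^ p - g'` on the left and
`λ f - g` on the right.
-/

namespace Matrix

variable {n α : Type*} [DecidableEq n]

theorem eq_updateRow_add_single [AddZeroClass α] {M : Matrix n n α} {i j : n} {v : n → α}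
    {c : α} (h : M i = v + Pi.single j c) : M = M.updateRow i v + single i j c := by
  ext a b
  by_cases ha : a = i
  · subst ha
    by_cases hb : b = j
    · subst hb; simp [h]
    · simp [h, hb, Ne.symm hb]
  · simp [updateRow_ne ha, Ne.symm ha]

variable [Fintype n] [Semiring α]

theorem single_mul_eq_of_row_eq {M N : Matrix n n α} {b : n} (h : M b = N b) (a : n) (c : α) :
    single a b c * M = single a b c * N := by
  rw [single_mul_eq_updateRow_zero, single_mul_eq_updateRow_zero, row, row, h]

theorem mul_single_eq_of_col_eq {M N : Matrix n n α} {a : n} (h : ∀ i, M i a = N i a) (b : n)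
    (c : α) : M * single a b c = N * single a b c := by
  have hcol : M.col a = N.col a := funext h
  rw [mul_single_eq_updateCol_zero, mul_single_eq_updateCol_zero, hcol]

end Matrix

theorem CharP.cast_choose_eq_zero {R : Type*} [Semiring R] {p : ℕ} [CharP R p] (hp : p.Prime)
    {k : ℕ} (hk0 : k ≠ 0) (hkp : k < p) : (p.choose k : R) = 0 :=
  (CharP.cast_eq_zero_iff R p _).mpr (hp.dvd_choose_self hk0 hkp)

open Matrix

section

variable {R : Type*} [CommRing R]

/-- Row `i` lists the coefficients of the image of `x ^ (n - i) * y ^ i` under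
`x ↦ x + f y, y ↦ y`: this is the `n`-th symmetric power of the unipotent matrix
`!![1, f; 0, 1]`. -/
def symPowUnipotent (n : ℕ) (f : R) : Matrix (Fin (n + 1)) (Fin (n + 1)) R :=
  of fun i j => if (i : ℕ) ≤ j then ((n - i).choose (j - i) : R) * f ^ ((j : ℕ) - i) else 0

theorem symPowUnipotent_apply_zero (n : ℕ) (f : R) (i : Fin (n + 1)) :
    symPowUnipotent n f i 0 = (1 : Matrix (Fin (n + 1)) (Fin (n + 1)) R) i 0 := by
  by_cases hi : i = 0 <;> simp [symPowUnipotent, one_apply, hi]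

theorem symPowUnipotent_last (n : ℕ) (f : R) :
    symPowUnipotent n f (Fin.last n) = (1 : Matrix (Fin (n + 1)) (Fin (n + 1)) R) (Fin.last n) := by
  ext j
  by_cases hj : j = Fin.last n
  · simp [symPowUnipotent, one_apply, hj]
  · have : (j : ℕ) < n := Fin.val_lt_last hj
    simp [symPowUnipotent, one_apply, Ne.symm hj]
    omega

theorem symPowUnipotent_row_of_succ_eq {n : ℕ} {i : Fin (n + 1)} (hi : (i : ℕ) + 1 = n)
    (f : R) :
    symPowUnipotent n f i = (1 + single i (Fin.last n) f) i := by
  ext j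
  obtain ⟨i, hi'⟩ := i
  obtain ⟨j, hj⟩ := j
  dsimp only at hi
  subst hi
  simp only [symPowUnipotent, of_apply, Matrix.add_apply, one_apply, single_apply, Fin.ext_iff,
    Fin.val_last, true_and, Nat.add_sub_cancel_left]
  rcases lt_trichotomy j i with hj | rfl | hj
  · simp [hj.not_ge, hj.ne']
    omega
  · simp
  · obtain rfl : j = i + 1 := by omega
    simp

theorem symPowUnipotent_zero_of_charP {p : ℕ} [CharP R p] (hp : p.Prime) (f : R) :
    symPowUnipotent p f 0 = Pi.single 0 1 + Pi.single (Fin.last p) (f ^ p) := by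
  ext j
  rcases eq_or_ne j 0 with rfl | hj0
  · simp [symPowUnipotent, Fin.ext_iff, hp.ne_zero]
  rcases eq_or_ne j (Fin.last p) with rfl | hjp
  · simp [symPowUnipotent, hj0]
  · have hchoose : (p.choose j : R) = 0 :=
      CharP.cast_choose_eq_zero hp (Fin.val_ne_zero_iff.mpr hj0) (Fin.val_lt_last hjp)
    simp [symPowUnipotent, hj0, hjp, hchoose]

/-- `diag(1, A⁽ⁿ⁻¹⁾(f))` is `A⁽ⁿ⁾(f)` with its first row replaced by `e₀`, as
`(n - 1) - (i - 1) = n - i` for `i ≥ 1`. -/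
theorem updateRow_zero_symPowUnipotent_apply (n : ℕ) (f : R) (i j : Fin (n + 1)) :
    (symPowUnipotent n f).updateRow 0 (Pi.single 0 1) i j =
      if (i : ℕ) = 0 then (if (j : ℕ) = 0 then 1 else 0)
      else if (j : ℕ) = 0 then 0
      else if (i : ℕ) ≤ (j : ℕ)
        then ((n - 1 - ((i : ℕ) - 1)).choose ((j : ℕ) - (i : ℕ)) : R)
          * f ^ ((j : ℕ) - (i : ℕ))
        else 0 := by
  rcases eq_or_ne i 0 with rfl | hi
  · simp only [updateRow_self, Fin.val_zero, if_true, Fin.val_eq_zero_iff, Pi.single_apply]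
  · have hi' : (i : ℕ) ≠ 0 := Fin.val_ne_zero_iff.mpr hi
    simp only [updateRow_ne hi, symPowUnipotent, of_apply, hi', if_false,
      show n - 1 - ((i : ℕ) - 1) = n - i by omega]
    split_ifs <;> first | rfl | omega

end

theorem stmt_11 {R : Type*} [CommRing R] (p : ℕ) (hp : p.Prime) [CharP R p] (lam : R)
    (A : R → Matrix (Fin (p + 1)) (Fin (p + 1)) R)
    (hA : ∀ (f : R) (i j : Fin (p + 1)),
      A f i j = if (i : ℕ) ≤ (j : ℕ)
        then (Nat.choose (p - (i : ℕ)) ((j : ℕ) - (i : ℕ)) : R) * f ^ ((j : ℕ) - (i : ℕ))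
        else 0)
    (P : R → Matrix (Fin (p + 1)) (Fin (p + 1)) R)
    (hP : ∀ g : R, P g = 1 + Matrix.single 0 ⟨p - 1, by omega⟩ lam
      - Matrix.single 0 (Fin.last p) g)
    (Atilde : R → Matrix (Fin (p + 1)) (Fin (p + 1)) R)
    (hAtilde : ∀ (f : R) (i j : Fin (p + 1)),
      Atilde f i j =
        if (i : ℕ) = 0 then (if (j : ℕ) = 0 then 1 else 0)
        else if (j : ℕ) = 0 then 0
        else if (i : ℕ) ≤ (j : ℕ)
          then (Nat.choose ((p - 1) - ((i : ℕ) - 1)) ((j : ℕ) - (i : ℕ)) : R)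
            * f ^ ((j : ℕ) - (i : ℕ))
          else 0)
    (f g g' : R) (hfg : f ^ p - lam * f = g' - g) :
    A f * P g' = P g * Atilde f := by
  have hAf : A f = symPowUnipotent p f := ext (hA f)
  have hAtf : Atilde f = (symPowUnipotent p f).updateRow 0 (Pi.single 0 1) :=
    ext fun i j => (hAtilde f i j).trans (updateRow_zero_symPowUnipotent_apply ..).symm
  set c : Fin (p + 1) := ⟨p - 1, by omega⟩
  set B := (symPowUnipotent p f).updateRow 0 (Pi.single 0 1)
  have hc : c ≠ 0 := Fin.ne_of_val_ne (show p - 1 ≠ 0 by have := hp.two_le; omega)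
  have hc_succ : (c : ℕ) + 1 = p := Nat.sub_add_cancel hp.one_lt.le
  have hlast : Fin.last p ≠ 0 := Fin.ne_of_val_ne hp.ne_zero
  have hcol := symPowUnipotent_apply_zero p f
  have hleft : symPowUnipotent p f * P g'
      = symPowUnipotent p f + single 0 c lam - single 0 (Fin.last p) g' := by
    rw [hP, mul_sub, mul_add, mul_one, mul_single_eq_of_col_eq hcol, mul_single_eq_of_col_eq hcol,
      one_mul, one_mul]
  have hright : P g * B = B + single 0 c lam + single 0 (Fin.last p) (lam * f)
      - single 0 (Fin.last p) g := by
    rw [hP, sub_mul, add_mul, one_mul,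
      single_mul_eq_of_row_eq ((updateRow_ne hc).trans (symPowUnipotent_row_of_succ_eq hc_succ f)),
      single_mul_eq_of_row_eq ((updateRow_ne hlast).trans (symPowUnipotent_last p f)),
      mul_add, mul_one, mul_one, single_mul_single_same, add_assoc]
  have hfp : f ^ p = lam * f - g + g' := by linear_combination hfg
  rw [hAf, hAtf, hleft, hright, eq_updateRow_add_single (symPowUnipotent_zero_of_charP hp f), hfp,
    single_add, sub_eq_add_neg (lam * f), single_add, ← single_neg]
  abel
end

section
/- Let $m_1, m_2 \geq 2$ be integers such that $(m_1-1)/m_1 + (m_2-1)/m_2 < 2$ and suppose there exist integers $n_1, n_2, n'_1, n'_2$ with $n_2 \equiv 1 \pmod{m_2}$, $m_1 m_2 \mid n_1 m_2 + n_2 m_1$, $n'_1 \equiv 1 \pmod{m_1}$, and $m_1 m_2 \mid n'_1 m_2 + n'_2 m_1$. Then $m_1 = m_2$. -/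
lemma aux_dvd (a b : ℕ) (n₁ n₂ : ℤ) (hc : n₂ ≡ 1 [ZMOD b])
    (hd : ((a : ℤ) * b) ∣ (n₁ * b + n₂ * a)) : (b : ℤ) ∣ a := by
  have h1 : (b : ℤ) ∣ n₂ * a := by
    have h2 : (b : ℤ) ∣ n₁ * b + n₂ * a := dvd_trans (dvd_mul_left _ _) hd
    have h3 : (b : ℤ) ∣ n₁ * b := Dvd.intro_left n₁ rfl
    exact (dvd_add_right h3).mp h2
  have h4 : (b : ℤ) ∣ (n₂ - 1) * a := by
    exact Dvd.dvd.mul_right (Int.ModEq.dvd hc.symm) a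
  have : (b : ℤ) ∣ n₂ * a - (n₂ - 1) * a := dvd_sub h1 h4
  simpa [sub_mul, sub_sub_cancel] using this

theorem stmt_15 (m₁ m₂ : ℕ) (h₁ : 2 ≤ m₁) (h₂ : 2 ≤ m₂)
    (hlt : ((m₁ : ℚ) - 1) / (m₁ : ℚ) + ((m₂ : ℚ) - 1) / (m₂ : ℚ) < 2)
    (ha : ∃ n₁ n₂ : ℤ, n₂ ≡ 1 [ZMOD m₂] ∧
      ((m₁ : ℤ) * m₂) ∣ (n₁ * m₂ + n₂ * m₁))
    (hb : ∃ n₁' n₂' : ℤ, n₁' ≡ 1 [ZMOD m₁] ∧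
      ((m₁ : ℤ) * m₂) ∣ (n₁' * m₂ + n₂' * m₁)) :
    m₁ = m₂ := by
  obtain ⟨n₁, n₂, hc, hd⟩ := ha
  obtain ⟨n₁', n₂', hc', hd'⟩ := hb
  have d1 : (m₂ : ℤ) ∣ m₁ := aux_dvd m₁ m₂ n₁ n₂ hc hd
  have d2 : (m₁ : ℤ) ∣ m₂ := by
    have hd'' : ((m₂ : ℤ) * m₁) ∣ (n₂' * m₁ + n₁' * m₂) := by
      rw [mul_comm, add_comm] at hd'; exact hd'
    exact aux_dvd m₂ m₁ n₂' n₁' hc' hd''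
  have := Int.dvd_antisymm (by positivity) (by positivity) d2 d1
  exact_mod_cast this
end
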